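/- arXiv:2005.09251 — 4 statements merged into one kernel-verified Lean document; each statement's English description precedes it below -/
import Mathlib

section
/- If G is a finite simple graph on n ≥ 1 vertices, p ∈ (0,1), and a ≥ 1 is an integer, then |t_{K_{2,a}}(f_{p,G})| ≤ 2·ν_{p,G}^a + 2·n^{−2/3}. -/
/- The `H`-density `t_H(W)` of a kernel `W` on the finite vertex set `V`, equipped with
the uniform probability measure: `t_H(W) = E ∏_{uv ∈ E(H)} W(x_u, x_v)` over independent
uniform `x_v`. -/
open scoped Classical in
noncomputable def graphDensity {V K : Type*} [Fintype V] [Fintype K] [LinearOrder K]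
    (H : SimpleGraph K) (W : V → V → ℝ) : ℝ :=
  (∑ x : K → V, ∏ p ∈ Finset.univ.filter (fun p : K × K => p.1 < p.2 ∧ H.Adj p.1 p.2),
    W (x p.1) (x p.2)) / (Fintype.card V : ℝ) ^ (Fintype.card K)

/-- The complete bipartite graph `K_{a,b}`, realized on `Fin (a + b)`. -/
def bipGraph (a b : ℕ) : SimpleGraph (Fin (a + b)) :=
  SimpleGraph.fromRel (fun u v => u.val < a ∧ a ≤ v.val)

/-- `W_G`, the `{0,1}`-valued adjacency kernel of the graph `G` (with `W_G(x,x) = 0`). -/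
def adjKernel {V : Type*} (G : SimpleGraph V) [DecidableRel G.Adj] (x y : V) : ℝ :=
  if G.Adj x y then 1 else 0

/-- `f_{p,G}(x,y) = W_G(x,y) − p`. -/
noncomputable def fP {V : Type*} (G : SimpleGraph V) [DecidableRel G.Adj] (p : ℝ)
    (x y : V) : ℝ :=
  adjKernel G x y - p

/-- `μ_{p,G} = max_x |E_y f_{p,G}(x,y)|`. -/
noncomputable def muP {V : Type*} [Fintype V] (G : SimpleGraph V) [DecidableRel G.Adj]
    (p : ℝ) : ℝ :=
  ⨆ x : V, |(∑ y : V, fP G p x y) / (Fintype.card V : ℝ)|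

/-- `ν_{p,G} = max_{x ≠ y} max(0, E_z f_{p,G}(x,z) f_{p,G}(z,y))`. -/
noncomputable def nuP {V : Type*} [Fintype V] (G : SimpleGraph V) [DecidableRel G.Adj]
    (p : ℝ) : ℝ :=
  ⨆ q : {q : V × V // q.1 ≠ q.2},
    max 0 ((∑ z : V, fP G p q.val.1 z * fP G p z q.val.2) / (Fintype.card V : ℝ))

/-!
Write `c(x,y) = E_z F(x,z) F(z,y)` for `F = f_{p,G}`. Then `t_{K_{2,a}}(F) = E_{x,y} c(x,y)^a`, and
expanding the `a`-th power writes every such moment as an average of squares, so all moments of `c`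
are nonnegative. Split `c = c⁺ - c⁻`. Off the diagonal `c⁺ ≤ ν`, and `|c| ≤ 1`, so
`E (c⁺)^k ≤ ν^k + 1/n`; for odd `k` the nonnegativity of `E c^k` passes this bound on to `E (c⁻)^k`,
which settles odd `a`. For even `a`, Cauchy–Schwarz between the neighbouring odd moments,
`(E (c⁻)^a)² ≤ E (c⁻)^(a-1) · E (c⁻)^(a+1)`, gives `E (c⁻)^a ≤ ν^a + 2n^(-2/3) - 1/n` as soon as
`n^(-1/3) ≤ 3/4`; for smaller `n` the trivial bound `t ≤ 1 ≤ 2n^(-2/3)` suffices.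
-/
open Finset

theorem prod_edges_bipGraph {M : Type*} [CommMonoid M] (b a : ℕ)
    [DecidablePred fun p : Fin (b + a) × Fin (b + a) => p.1 < p.2 ∧ (bipGraph b a).Adj p.1 p.2]
    (g : Fin (b + a) × Fin (b + a) → M) :
    ∏ p ∈ univ.filter (fun p : Fin (b + a) × Fin (b + a) => p.1 < p.2 ∧ (bipGraph b a).Adj p.1 p.2),
      g p = ∏ i : Fin b, ∏ k : Fin a, g (Fin.castAdd a i, Fin.natAdd b k) := by
  rw [prod_filter, Fintype.prod_prod_type, Fin.prod_univ_add]
  simp only [Fin.prod_univ_add, bipGraph, SimpleGraph.fromRel_adj, ← Fin.val_fin_lt,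
    Fin.val_castAdd, Fin.val_natAdd, ne_eq, Fin.ext_iff]
  simp (disch := omega) only [if_pos, if_neg, prod_const_one, one_mul, mul_one]

section kernel

variable {V : Type*} [Fintype V]

theorem graphDensity_bipGraph (W : V → V → ℝ) (b a : ℕ) :
    graphDensity (bipGraph b a) W =
      (∑ u : Fin b → V, (∑ w, ∏ i, W (u i) w) ^ a) / (Fintype.card V : ℝ) ^ (b + a) := by
  rw [graphDensity, Fintype.card_fin, ← (Fin.appendEquiv b a).sum_comp, Fintype.sum_prod_type]
  simp only [prod_edges_bipGraph, Fin.appendEquiv_apply, Fin.append_left, Fin.append_right,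
    Fintype.sum_pow]
  rw [Fintype.sum_congr _ _ fun u => Fintype.sum_congr _ _ fun z => prod_comm]

theorem graphDensity_bipGraph_two (W : V → V → ℝ) (a : ℕ) :
    graphDensity (bipGraph 2 a) W =
      (∑ x, ∑ y, (∑ w, W x w * W y w) ^ a) / (Fintype.card V : ℝ) ^ (2 + a) := by
  rw [graphDensity_bipGraph, ← (piFinTwoEquiv fun _ => V).symm.sum_comp, Fintype.sum_prod_type]
  simp [Fin.prod_univ_two]

theorem graphDensity_bipGraph_two_nonneg (W : V → V → ℝ) (a : ℕ) :
    0 ≤ graphDensity (bipGraph 2 a) W := by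
  have hsq : ∑ x, ∑ y, (∑ w, W x w * W y w) ^ a = ∑ z : Fin a → V, (∑ x, ∏ i, W x (z i)) ^ 2 := by
    simp only [Fintype.sum_pow, prod_mul_distrib, sq, sum_mul_sum]
    exact (sum_congr rfl fun x _ => sum_comm).trans sum_comm
  rw [graphDensity_bipGraph_two, hsq]
  positivity

noncomputable def kernelSq (F : V → V → ℝ) (x y : V) : ℝ :=
  (∑ z, F x z * F z y) / Fintype.card V

noncomputable def kernelMoment (c : V → V → ℝ) (k : ℕ) : ℝ :=
  (∑ x, ∑ y, c x y ^ k) / (Fintype.card V : ℝ) ^ 2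

theorem graphDensity_bipGraph_two_eq_kernelMoment {F : V → V → ℝ} (hF : ∀ x y, F x y = F y x)
    (a : ℕ) : graphDensity (bipGraph 2 a) F = kernelMoment (kernelSq F) a := by
  simp only [graphDensity_bipGraph_two, kernelMoment, kernelSq, div_pow, ← sum_div, div_div,
    pow_add, hF _ (_ : V)]
  rw [mul_comm ((Fintype.card V : ℝ) ^ 2)]

theorem kernelMoment_kernelSq_nonneg {F : V → V → ℝ} (hF : ∀ x y, F x y = F y x) (k : ℕ) :
    0 ≤ kernelMoment (kernelSq F) k := by
  rw [← graphDensity_bipGraph_two_eq_kernelMoment hF]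
  exact graphDensity_bipGraph_two_nonneg F k

theorem abs_kernelSq_le_one {F : V → V → ℝ} (hF : ∀ x y, |F x y| ≤ 1) (x y : V) :
    |kernelSq F x y| ≤ 1 := by
  rw [kernelSq, abs_div, Nat.abs_cast]
  refine div_le_one_of_le₀ ((abs_sum_le_sum_abs _ _).trans ?_) (Nat.cast_nonneg (Fintype.card V))
  calc ∑ z, |F x z * F z y| ≤ ∑ _z : V, (1 : ℝ) :=
        sum_le_sum fun z _ => by rw [abs_mul]; exact mul_le_one₀ (hF x z) (abs_nonneg _) (hF z y)
    _ = Fintype.card V := by simp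

end kernel

section posNegPart

variable {R : Type*} [Ring R] [LinearOrder R] [IsOrderedRing R]

theorem pow_eq_posPart_pow_sub_negPart_pow {k : ℕ} (hk : Odd k) (a : R) :
    a ^ k = a⁺ ^ k - a⁻ ^ k := by
  rcases le_total 0 a with h | h
  · simp [posPart_eq_self.2 h, negPart_eq_zero.2 h, hk.pos.ne']
  · simp [posPart_eq_zero.2 h, negPart_eq_neg.2 h, hk.pos.ne', hk.neg_pow]

theorem pow_eq_posPart_pow_add_negPart_pow {k : ℕ} (hk : Even k) (hk₀ : k ≠ 0) (a : R) :
    a ^ k = a⁺ ^ k + a⁻ ^ k := by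
  rcases le_total 0 a with h | h
  · simp [posPart_eq_self.2 h, negPart_eq_zero.2 h, hk₀]
  · simp [posPart_eq_zero.2 h, negPart_eq_neg.2 h, hk₀, hk.neg_pow]

end posNegPart

/- With `A = ν^(a-1)` and `ε³ = 1/n`, the left side is the product of the bounds on the odd
moments of `c⁻` of orders `a ∓ 1`. -/
theorem add_cube_mul_add_cube_le_sq {A ν ε : ℝ} (hA : 0 ≤ A) (hAν : A ≤ ν) (hν : ν ≤ 1)
    (hε : 0 ≤ ε) (hε' : ε ≤ 3 / 4) :
    (A + ε ^ 3) * (A * ν ^ 2 + ε ^ 3) ≤ (A * ν + 2 * ε ^ 2 - ε ^ 3) ^ 2 := by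
  have hquad : 0 ≤ (4 - 3 * ε) * A ^ 2 - ε * A + 4 * ε ^ 2 * (1 - ε) := by
    nlinarith [sq_nonneg (A - ε / 2), mul_nonneg (sq_nonneg A) (sub_nonneg.2 hε'),
      mul_nonneg (sq_nonneg ε) (sub_nonneg.2 hε')]
  have hlin : (4 - 3 * ε) * A ^ 2 ≤ A * (4 * ν - 2 * ν * ε - ε * ν ^ 2) := by
    nlinarith [mul_nonneg (mul_nonneg hA hε) (mul_nonneg (hA.trans hAν) (sub_nonneg.2 hν)),
      mul_nonneg hA (sub_nonneg.2 hAν)]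
  have hdiff : (A * ν + 2 * ε ^ 2 - ε ^ 3) ^ 2 - (A + ε ^ 3) * (A * ν ^ 2 + ε ^ 3) =
      ε ^ 2 * (A * (4 * ν - 2 * ν * ε - ε * ν ^ 2) - ε * A + 4 * ε ^ 2 * (1 - ε)) := by ring
  have hbracket : 0 ≤ A * (4 * ν - 2 * ν * ε - ε * ν ^ 2) - ε * A + 4 * ε ^ 2 * (1 - ε) := by
    linarith
  exact sub_nonneg.1 (hdiff ▸ mul_nonneg (sq_nonneg ε) hbracket)

section moments

variable {V : Type*} [Fintype V] (c : V → V → ℝ)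

theorem kernelMoment_eq_sub_of_odd {k : ℕ} (hk : Odd k) :
    kernelMoment c k = kernelMoment c⁺ k - kernelMoment c⁻ k := by
  simp only [kernelMoment, Pi.posPart_apply, Pi.negPart_apply, ← sub_div, ← sum_sub_distrib,
    ← pow_eq_posPart_pow_sub_negPart_pow hk]

theorem kernelMoment_eq_add_of_even {k : ℕ} (hk : Even k) (hk₀ : k ≠ 0) :
    kernelMoment c k = kernelMoment c⁺ k + kernelMoment c⁻ k := by
  simp only [kernelMoment, Pi.posPart_apply, Pi.negPart_apply, ← add_div, ← sum_add_distrib,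
    ← pow_eq_posPart_pow_add_negPart_pow hk hk₀]

variable {c}

theorem kernelMoment_nonneg (hc : ∀ x y, 0 ≤ c x y) (k : ℕ) : 0 ≤ kernelMoment c k :=
  div_nonneg (sum_nonneg fun x _ => sum_nonneg fun y _ => pow_nonneg (hc x y) k) (sq_nonneg _)

theorem kernelMoment_le_one (hc : ∀ x y, |c x y| ≤ 1) (k : ℕ) : kernelMoment c k ≤ 1 := by
  refine div_le_one_of_le₀ ?_ (by positivity)
  calc ∑ x, ∑ y, c x y ^ k ≤ ∑ _x : V, ∑ _y : V, (1 : ℝ) :=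
        sum_le_sum fun x _ => sum_le_sum fun y _ =>
          (le_abs_self _).trans (abs_pow (c x y) k ▸ pow_le_one₀ (abs_nonneg _) (hc x y))
    _ = (Fintype.card V : ℝ) ^ 2 := by simp [sq]

theorem kernelMoment_posPart_le [Nonempty V] {ν : ℝ} (hν : 0 ≤ ν) (hdiag : ∀ x, c x x ≤ 1)
    (hoff : ∀ x y, x ≠ y → c x y ≤ ν) (k : ℕ) :
    kernelMoment c⁺ k ≤ ν ^ k + (Fintype.card V : ℝ)⁻¹ := by
  classical
  have hpt : ∀ x y, (c x y)⁺ ^ k ≤ ν ^ k + if x = y then 1 else 0 := by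
    intro x y
    rw [posPart_def]
    by_cases hxy : x = y
    · subst hxy
      simpa using (pow_le_one₀ (n := k) (le_max_right _ _) (max_le (hdiag x) zero_le_one)).trans
        (le_add_of_nonneg_left (pow_nonneg hν k))
    · simpa [hxy] using pow_le_pow_left₀ (le_max_right _ _) (max_le (hoff x y hxy) hν) k
  have hn : (Fintype.card V : ℝ) ≠ 0 := Nat.cast_ne_zero.2 Fintype.card_ne_zero
  calc kernelMoment c⁺ k
      ≤ (∑ x : V, ∑ y : V, (ν ^ k + if x = y then 1 else 0)) / (Fintype.card V : ℝ) ^ 2 :=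
        div_le_div_of_nonneg_right (sum_le_sum fun x _ => sum_le_sum fun y _ => hpt x y)
          (by positivity)
    _ = ν ^ k + (Fintype.card V : ℝ)⁻¹ := by
        simp only [sum_add_distrib, sum_const, card_univ, nsmul_eq_mul, sum_ite_eq, mem_univ,
          ↓reduceIte, mul_one]
        field_simp

theorem kernelMoment_succ_sq_le (hc : ∀ x y, 0 ≤ c x y) (m : ℕ) :
    kernelMoment c (m + 1) ^ 2 ≤ kernelMoment c m * kernelMoment c (m + 2) := by
  have hCS : (∑ q : V × V, c q.1 q.2 ^ (m + 1)) ^ 2 ≤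
      (∑ q : V × V, c q.1 q.2 ^ m) * ∑ q : V × V, c q.1 q.2 ^ (m + 2) :=
    sum_sq_le_sum_mul_sum_of_sq_le_mul _ (fun q _ => pow_nonneg (hc _ _) _)
      (fun q _ => pow_nonneg (hc _ _) _) fun q _ => by ring_nf; rfl
  simp only [Fintype.sum_prod_type] at hCS
  rw [kernelMoment, kernelMoment, kernelMoment, div_pow, div_mul_div_comm, ← sq]
  exact div_le_div_of_nonneg_right hCS (by positivity)

theorem kernelMoment_le [Nonempty V] {ν ε : ℝ} (hc : ∀ x y, |c x y| ≤ 1) (hpos : ∀ k, 0 ≤ kernelMoment c k) (hν₀ : 0 ≤ ν) (hν₁ : ν ≤ 1)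
    (hoff : ∀ x y, x ≠ y → c x y ≤ ν) (hε : 0 ≤ ε) (hε3 : (Fintype.card V : ℝ)⁻¹ = ε ^ 3)
    {a : ℕ} (ha : 1 ≤ a) : kernelMoment c a ≤ 2 * ν ^ a + 2 * ε ^ 2 := by
  rcases lt_or_ge (3 / 4) ε with hbig | hε'
  · nlinarith [kernelMoment_le_one hc a, pow_nonneg hν₀ a]
  have hP : ∀ k, kernelMoment c⁺ k ≤ ν ^ k + ε ^ 3 := fun k =>
    hε3 ▸ kernelMoment_posPart_le hν₀ (fun x => (abs_le.1 (hc x x)).2) hoff k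
  have hN : ∀ k, 0 ≤ kernelMoment c⁻ k := kernelMoment_nonneg fun x y => negPart_nonneg _
  have hQ : ∀ k, Odd k → kernelMoment c⁻ k ≤ ν ^ k + ε ^ 3 := fun k hk => by
    linarith [hpos k, kernelMoment_eq_sub_of_odd c hk, hP k]
  have hε32 : ε ^ 3 ≤ ε ^ 2 := pow_le_pow_of_le_one hε (by linarith) (by norm_num)
  rcases Nat.even_or_odd a with heven | hodd
  · obtain ⟨m, rfl⟩ : ∃ m, a = m + 1 := ⟨a - 1, by omega⟩
    have hm : Odd m := Nat.not_even_iff_odd.1 (Nat.even_add_one.1 heven)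
    have hsq : kernelMoment c⁻ (m + 1) ^ 2 ≤ (ν ^ (m + 1) + 2 * ε ^ 2 - ε ^ 3) ^ 2 :=
      calc kernelMoment c⁻ (m + 1) ^ 2
          ≤ kernelMoment c⁻ m * kernelMoment c⁻ (m + 2) :=
            kernelMoment_succ_sq_le (fun x y => negPart_nonneg _) m
        _ ≤ (ν ^ m + ε ^ 3) * (ν ^ m * ν ^ 2 + ε ^ 3) := by
            rw [← pow_add]
            exact mul_le_mul (hQ m hm) (hQ (m + 2) (hm.add_even even_two)) (hN _)
              (by positivity)
        _ ≤ (ν ^ m * ν + 2 * ε ^ 2 - ε ^ 3) ^ 2 :=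
            add_cube_mul_add_cube_le_sq (pow_nonneg hν₀ m) (pow_le_of_le_one hν₀ hν₁ hm.pos.ne')
              hν₁ hε hε'
        _ = (ν ^ (m + 1) + 2 * ε ^ 2 - ε ^ 3) ^ 2 := by rw [← pow_succ]
    have hQa : kernelMoment c⁻ (m + 1) ≤ ν ^ (m + 1) + 2 * ε ^ 2 - ε ^ 3 :=
      (sq_le_sq₀ (hN _) (by linarith [pow_nonneg hν₀ (m + 1), pow_nonneg hε 2])).1 hsq
    rw [kernelMoment_eq_add_of_even c heven (by omega)]
    linarith [hP (m + 1)]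
  · rw [kernelMoment_eq_sub_of_odd c hodd]
    linarith [hP a, hN a, pow_nonneg hν₀ a, pow_nonneg hε 2]

end moments

section fP

variable {V : Type*} (G : SimpleGraph V) [DecidableRel G.Adj]

theorem fP_comm (p : ℝ) (x y : V) : fP G p x y = fP G p y x := by
  simp only [fP, adjKernel, G.adj_comm]

theorem abs_fP_le_one {p : ℝ} (hp : p ∈ Set.Icc 0 1) (x y : V) : |fP G p x y| ≤ 1 := by
  obtain ⟨hp₀, hp₁⟩ := hp
  unfold fP adjKernel
  split_ifs <;> rw [abs_le] <;> constructor <;> linarith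

variable [Fintype V]

theorem kernelSq_fP_le_nuP (p : ℝ) {x y : V} (hxy : x ≠ y) :
    kernelSq (fP G p) x y ≤ nuP G p :=
  (le_max_right _ _).trans <| le_ciSup (Set.finite_range _).bddAbove
    (f := fun q : {q : V × V // q.1 ≠ q.2} => max 0 (kernelSq (fP G p) q.1.1 q.1.2)) ⟨(x, y), hxy⟩

theorem nuP_nonneg (p : ℝ) : 0 ≤ nuP G p :=
  Real.iSup_nonneg fun _ => le_max_left _ _

theorem nuP_le_one {p : ℝ} (hp : p ∈ Set.Icc 0 1) : nuP G p ≤ 1 :=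
  Real.iSup_le (fun q => max_le zero_le_one
    (abs_le.1 (abs_kernelSq_le_one (abs_fP_le_one G hp) q.val.1 q.val.2)).2) zero_le_one

end fP

/-- If `G` is a finite simple graph on `n ≥ 1` vertices, `p ∈ (0,1)`, and `a ≥ 1` is an
integer, then `|t_{K_{2,a}}(f_{p,G})| ≤ 2 ν_{p,G}^a + 2 n^{−2/3}`. -/
theorem density_K2a_f_bound {V : Type*} [Fintype V] (G : SimpleGraph V)
    [DecidableRel G.Adj] (n : ℕ) (hn : Fintype.card V = n) (hn1 : 1 ≤ n)
    (p : ℝ) (hp : p ∈ Set.Ioo (0 : ℝ) 1) (a : ℕ) (ha : 1 ≤ a) :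
    |graphDensity (bipGraph 2 a) (fP G p)| ≤
      2 * nuP G p ^ a + 2 * (n : ℝ) ^ (-(2 : ℝ) / 3) := by
  subst hn
  have : Nonempty V := Fintype.card_pos_iff.1 hn1
  have hp' := Set.Ioo_subset_Icc_self hp
  have hε3 : (Fintype.card V : ℝ)⁻¹ = ((Fintype.card V : ℝ) ^ (-(1 : ℝ) / 3)) ^ 3 := by
    rw [← Real.rpow_natCast, ← Real.rpow_mul (Nat.cast_nonneg _)]
    norm_num [Real.rpow_neg_one]
  have hε2 : ((Fintype.card V : ℝ) ^ (-(1 : ℝ) / 3)) ^ 2 =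
      (Fintype.card V : ℝ) ^ (-(2 : ℝ) / 3) := by
    rw [← Real.rpow_natCast, ← Real.rpow_mul (Nat.cast_nonneg _)]
    norm_num
  rw [graphDensity_bipGraph_two_eq_kernelMoment (fP_comm G p),
    abs_of_nonneg (kernelMoment_kernelSq_nonneg (fP_comm G p) a), ← hε2]
  exact kernelMoment_le (abs_kernelSq_le_one (abs_fP_le_one G hp'))
    (kernelMoment_kernelSq_nonneg (fP_comm G p)) (nuP_nonneg G p) (nuP_le_one G hp')
    (fun _ _ => kernelSq_fP_le_nuP G p) (by positivity) hε3 ha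
end

section
/- Let H be a finite graph, p ∈ ℝ, and f : Ω² → ℝ a symmetric bounded measurable function on a probability space Ω. Then t_H(p + f) = Σ_J p^{e(H)−e(J)} · C_{H,J} · t_J(f), where the sum is over isomorphism classes of graphs J with no isolated vertices (including the empty graph), e(J) is the number of edges of J, and C_{H,J} is the number of subgraphs of H isomorphic to J. -/
/-!
Expanding `∏_{uv ∈ E(H)} (p + f(x_u, x_v))` multiplies out to a sum over edge subsets `s` of
`p^{e(H) - |s|} ∏_{uv ∈ s} f(x_u, x_v)`; since `f` is bounded, every term is integrable, so the
integral can be taken termwise, and the integral of the `s`-term is the density of the graph with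
edge set `s`.
-/

open MeasureTheory

open scoped Classical in
noncomputable def graphonDensity {K : Type*} [Fintype K] [LinearOrder K] (H : SimpleGraph K)
    {Ω : Type*} [MeasureSpace Ω] (W : Ω → Ω → ℝ) : ℝ :=
  ∫ x : K → Ω, ∏ p ∈ Finset.univ.filter (fun p : K × K => p.1 < p.2 ∧ H.Adj p.1 p.2),
    W (x p.1) (x p.2)

open Finset

theorem Finset.prod_const_add {ι R : Type*} [CommSemiring R] (s : Finset ι) (a : R)
    (g : ι → R) : ∏ i ∈ s, (a + g i) = ∑ t ∈ s.powerset, a ^ (#s - #t) * ∏ i ∈ t, g i := by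
  classical
  rw [prod_congr rfl fun i _ => add_comm a (g i), prod_add]
  refine sum_congr rfl fun t ht => ?_
  rw [prod_const, card_sdiff_of_subset (mem_powerset.1 ht), mul_comm]

section Integral

variable {α ι : Type*} [MeasurableSpace α] {μ : Measure α}

theorem MeasureTheory.integrable_finset_prod_of_bounded [IsFiniteMeasure μ] (s : Finset ι)
    {g : ι → α → ℝ} (hg : ∀ i ∈ s, AEStronglyMeasurable (g i) μ) {C : ℝ}
    (hC : ∀ i ∈ s, ∀ x, |g i x| ≤ C) : Integrable (fun x => ∏ i ∈ s, g i x) μ := by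
  refine .of_bound (Finset.aestronglyMeasurable_fun_prod s hg) (C ^ #s) (.of_forall fun x => ?_)
  rw [Real.norm_eq_abs, abs_prod, ← prod_const]
  exact prod_le_prod (fun i _ => abs_nonneg _) fun i hi => hC i hi x

theorem MeasureTheory.integral_prod_const_add (s : Finset ι) (a : ℝ) (g : ι → α → ℝ)
    (hg : ∀ t ⊆ s, Integrable (fun x => ∏ i ∈ t, g i x) μ) :
    ∫ x, ∏ i ∈ s, (a + g i x) ∂μ = ∑ t ∈ s.powerset, a ^ (#s - #t) * ∫ x, ∏ i ∈ t, g i x ∂μ := by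
  simp_rw [prod_const_add]
  rw [integral_finsetSum _ fun t ht => (hg t (mem_powerset.1 ht)).const_mul _]
  simp_rw [integral_const_mul]

end Integral

namespace SimpleGraph

variable {K : Type*}

theorem edgeSet_fromEdgeSet_of_subset {G : SimpleGraph K} {s : Set (Sym2 K)}
    (hs : s ⊆ G.edgeSet) : (fromEdgeSet s).edgeSet = s :=
  (edgeSet_eq_iff _ _).2
    ⟨rfl, Set.subset_compl_iff_disjoint_right.1 (hs.trans G.edgeSet_subset_compl_diagSet)⟩

theorem graphonDensity_eq_integral_prod_inf_sup [Fintype K] [LinearOrder K] (G : SimpleGraph K)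
    {Ω : Type*} [MeasureSpace Ω] (W : Ω → Ω → ℝ) (s : Finset (Sym2 K))
    (hs : (s : Set (Sym2 K)) = G.edgeSet) :
    graphonDensity G W = ∫ x : K → Ω, ∏ e ∈ s, W (x e.inf) (x e.sup) := by
  classical
  rw [graphonDensity]
  congr 1 with x
  refine prod_nbij' (fun q => s(q.1, q.2)) (fun e => (e.inf, e.sup)) ?_ ?_ ?_ ?_ ?_
  · intro q hq
    simp only [mem_filter, mem_univ, true_and] at hq
    rw [← mem_coe, hs]
    exact hq.2
  · intro e he
    rw [← mem_coe, hs] at he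
    induction e with | _ a b
    rw [mem_edgeSet] at he
    rcases he.ne.lt_or_gt with h | h <;> simp [h, h.le, he, he.symm]
  · intro q hq
    simp only [mem_filter, mem_univ, true_and] at hq
    simp [hq.1.le]
  · intro e _
    exact Sym2.inf_eq_inf_and_sup_eq_sup.1 (by simp [Sym2.inf_le_sup])
  · intro q hq
    simp only [mem_filter, mem_univ, true_and] at hq
    simp [hq.1.le]

end SimpleGraph

theorem density_expansion_general {Ω : Type*} [MeasureSpace Ω]
    [IsProbabilityMeasure (volume : Measure Ω)]
    (f : Ω → Ω → ℝ)
    (hfmeas : Measurable (Function.uncurry f)) (hfbdd : ∃ C : ℝ, ∀ x y, |f x y| ≤ C)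
    {K : Type*} [Fintype K] [LinearOrder K]
    (H : SimpleGraph K) [DecidableRel H.Adj] (p : ℝ) :
    graphonDensity H (fun x y => p + f x y) =
      ∑ s ∈ H.edgeFinset.powerset,
        p ^ (H.edgeFinset.card - s.card) *
          graphonDensity (SimpleGraph.fromEdgeSet (s : Set (Sym2 K))) f := by
  obtain ⟨C, hC⟩ := hfbdd
  have hmeas (a b : K) : Measurable fun x : K → Ω => f (x a) (x b) := by
    have hpair : Measurable fun x : K → Ω => (x a, x b) := by fun_prop
    exact hfmeas.comp hpair
  have hint (t : Finset (Sym2 K)) :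
      Integrable (fun x : K → Ω => ∏ e ∈ t, f (x e.inf) (x e.sup)) :=
    integrable_finset_prod_of_bounded t (fun e _ => (hmeas _ _).aestronglyMeasurable)
      fun e _ x => hC _ _
  rw [H.graphonDensity_eq_integral_prod_inf_sup _ H.edgeFinset H.coe_edgeFinset,
    integral_prod_const_add _ _ _ fun t _ => hint t]
  refine sum_congr rfl fun t ht => ?_
  rw [SimpleGraph.graphonDensity_eq_integral_prod_inf_sup _ f t
    (SimpleGraph.edgeSet_fromEdgeSet_of_subset
      (H.coe_edgeFinset ▸ coe_subset.2 (mem_powerset.1 ht))).symm]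

/-- Expansion of `t_H(p + f)`.  The sum over isomorphism classes `J` of graphs with no
isolated vertices, `t_H(p + f) = Σ_J p^{e(H)−e(J)} C_{H,J} t_J(f)` (where `C_{H,J}` is the
number of subgraphs of `H` isomorphic to `J`, and the empty graph contributes `p^{e(H)}`),
is stated here by enumerating the subgraphs themselves: a subgraph of `H` with no isolated
vertices is precisely determined by a subset `s` of the edges of `H`, its density `t_J(f)`
being that of the graph with edge set `s` (isolated vertices do not affect densities over a
probability space). -/
theorem density_expansion {Ω : Type*} [MeasureSpace Ω]
    [IsProbabilityMeasure (volume : Measure Ω)]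
    (f : Ω → Ω → ℝ) (hfsymm : ∀ x y, f x y = f y x)
    (hfmeas : Measurable (Function.uncurry f)) (hfbdd : ∃ C : ℝ, ∀ x y, |f x y| ≤ C)
    {K : Type*} [Fintype K] [LinearOrder K] [DecidableEq K]
    (H : SimpleGraph K) [DecidableRel H.Adj] (p : ℝ) :
    graphonDensity H (fun x y => p + f x y) =
      ∑ s ∈ H.edgeFinset.powerset,
        p ^ (H.edgeFinset.card - s.card) *
          graphonDensity (SimpleGraph.fromEdgeSet (s : Set (Sym2 K))) f :=
  density_expansion_general f hfmeas hfbdd H p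
end

section
/- Let G be a finite simple graph containing no clique of size k+1 and no independent set of size ℓ+1, and let r ≥ 2 be an integer with k + 2 − r ≥ 1. Then every clique of size r−1 in G is contained in strictly fewer than R(k+2−r, ℓ+1) cliques of size r; equivalently, for every clique S of size r−1, the number of vertices adjacent to all of S is strictly less than R(k+2−r, ℓ+1). -/
/-- `RamseyProp n k l` : every simple graph on `n` vertices contains a clique of size `k`
or an independent set of size `l`. -/
def RamseyProp (n k l : ℕ) : Prop :=
  ∀ G : SimpleGraph (Fin n), (∃ s, G.IsNClique k s) ∨ (∃ s, Gᶜ.IsNClique l s)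

/-- The Ramsey number `R(k, l)`. -/
noncomputable def ramseyNumber (k l : ℕ) : ℕ := sInf {n | RamseyProp n k l}

/-!
Let `T` be the common neighbourhood of the `(r-1)`-clique `S`. A `(k+2-r)`-clique inside `T`
together with `S` would be a `(k+1)`-clique of `G`, and an independent set of `G[T]` is
independent in `G`; so `|T| < R(k+2-r, ℓ+1)`. That the infimum defining `R` is attained (rather
than the junk value `sInf ∅ = 0`) follows from the Erdős–Szekeres recursion
`R(k+1, ℓ+1) ≤ R(k, ℓ+1) + R(k+1, ℓ)`.
-/

namespace SimpleGraph

variable {V : Type*} {G : SimpleGraph V}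

theorem IsNClique.union [DecidableEq V] {m n : ℕ} {s t : Finset V} (hs : G.IsNClique m s)
    (ht : G.IsNClique n t) (hst : ∀ a ∈ s, ∀ b ∈ t, G.Adj a b) :
    G.IsNClique (m + n) (s ∪ t) where
  isClique := by
    rw [Finset.coe_union, IsClique, Set.pairwise_union]
    exact ⟨hs.isClique, ht.isClique, fun a ha b hb _ => ⟨hst a ha b hb, (hst a ha b hb).symm⟩⟩
  card_eq := by
    rw [Finset.card_union_of_disjoint, hs.card_eq, ht.card_eq]
    exact Finset.disjoint_left.2 fun a ha hat => (hst a ha a hat).ne rfl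

theorem CliqueFree.induce_of_forall_adj {m n : ℕ} {S : Finset V} {T : Set V}
    (h : G.CliqueFree (m + n)) (hS : G.IsNClique m S) (hST : ∀ s ∈ S, ∀ t ∈ T, G.Adj s t) :
    (G.induce T).CliqueFree n := by
  classical
  intro t ht
  have ht' : G.IsNClique n (t.map (Function.Embedding.subtype _)) :=
    ht.map.mono (map_comap_le _ _)
  refine h _ (hS.union ht' ?_)
  simp only [Finset.mem_map, Function.Embedding.coe_subtype]
  rintro s hs _ ⟨u, -, rfl⟩
  exact hST s hs u u.2

theorem CliqueFree.compl_induce {n : ℕ} (h : Gᶜ.CliqueFree n) (s : Set V) :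
    (G.induce s)ᶜ.CliqueFree n :=
  h.comap (Embedding.complEquiv (Embedding.induce s)).isContained

end SimpleGraph

open SimpleGraph

theorem ramseyProp_iff {n k l : ℕ} :
    RamseyProp n k l ↔ ∀ G : SimpleGraph (Fin n), ¬(G.CliqueFree k ∧ Gᶜ.CliqueFree l) := by
  simp only [RamseyProp, CliqueFree, not_and_or, not_forall_not]

theorem RamseyProp.card_lt {n k l : ℕ} (h : RamseyProp n k l) {V : Type*} [Finite V]
    {G : SimpleGraph V} (hk : G.CliqueFree k) (hl : Gᶜ.CliqueFree l) : Nat.card V < n := by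
  by_contra! hn
  cases nonempty_fintype V
  obtain ⟨f⟩ := Function.Embedding.nonempty_of_card_le (α := Fin n) (β := V)
    (by simpa [Nat.card_eq_fintype_card] using hn)
  refine ramseyProp_iff.1 h (G.comap f) ⟨hk.comap (Embedding.comap f G).isContained, ?_⟩
  exact hl.comap (Embedding.complEquiv (Embedding.comap f G)).isContained

theorem RamseyProp.add {a b k l : ℕ} (ha : RamseyProp a k (l + 1)) (hb : RamseyProp b (k + 1) l)
    (hab : 0 < a + b) : RamseyProp (a + b) (k + 1) (l + 1) := by
  classical
  rw [ramseyProp_iff]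
  rintro G ⟨hk, hl⟩
  let v : Fin (a + b) := ⟨0, hab⟩
  have hv : ∀ {H : SimpleGraph (Fin (a + b))}, H.IsNClique 1 {v} := isNClique_singleton.2 rfl
  have hN : G.degree v < a := by
    rw [← card_neighborSet_eq_degree, ← Nat.card_eq_fintype_card]
    refine ha.card_lt (G := G.induce (G.neighborSet v)) ?_ (hl.compl_induce _)
    exact (add_comm k 1 ▸ hk).induce_of_forall_adj hv (by simp)
  have hM : Gᶜ.degree v < b := by
    rw [← card_neighborSet_eq_degree, ← Nat.card_eq_fintype_card]
    refine hb.card_lt (G := (Gᶜ.induce (Gᶜ.neighborSet v))ᶜ)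
      ((compl_compl G).symm ▸ hk |>.compl_induce _) ?_
    rw [compl_compl]
    exact (add_comm l 1 ▸ hl).induce_of_forall_adj hv (by simp +contextual)
  have := G.degree_lt_card_verts v
  rw [degree_compl, Fintype.card_fin] at hM
  omega

theorem exists_ramseyProp (k l : ℕ) : ∃ n, 0 < n ∧ RamseyProp n k l := by
  induction k generalizing l with
  | zero => exact ⟨1, one_pos, ramseyProp_iff.2 fun G h => not_cliqueFree_zero h.1⟩
  | succ k ihk =>
    induction l with
    | zero => exact ⟨1, one_pos, ramseyProp_iff.2 fun G h => not_cliqueFree_zero h.2⟩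
    | succ l ihl =>
      obtain ⟨a, ha, hA⟩ := ihk (l + 1)
      obtain ⟨b, -, hB⟩ := ihl
      exact ⟨a + b, by omega, hA.add hB (by omega)⟩

theorem ramseyProp_ramseyNumber (k l : ℕ) : RamseyProp (ramseyNumber k l) k l :=
  Nat.sInf_mem (exists_ramseyProp k l |>.imp fun _ => And.right)

open scoped Classical in
theorem clique_extension_bound_general {V : Type*} [Fintype V] (G : SimpleGraph V)
    (k l r : ℕ) (hG : G.CliqueFree (k + 1)) (hG' : Gᶜ.CliqueFree (l + 1)) :
    ∀ S : Finset V, G.IsNClique (r - 1) S →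
      (Finset.univ.filter (fun v : V => ∀ s ∈ S, G.Adj v s)).card <
        ramseyNumber (k + 2 - r) (l + 1) := by
  intro S hS
  set T := Finset.univ.filter (fun v : V => ∀ s ∈ S, G.Adj v s)
  -- `k + 1 ≤ (r - 1) + (k + 2 - r)` holds for every `r` in truncated subtraction.
  have hT : (G.induce (T : Set V)).CliqueFree (k + 2 - r) :=
    (hG.mono (by omega)).induce_of_forall_adj hS fun s hs t ht =>
      ((Finset.mem_filter.1 ht).2 s hs).symm
  simpa using (ramseyProp_ramseyNumber _ _).card_lt hT (hG'.compl_induce _)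

open scoped Classical in
/-- If `G` has no clique of size `k+1` and no independent set of size `ℓ+1`, and `r ≥ 2`
with `k + 2 − r ≥ 1`, then for every clique `S` of size `r−1` in `G`, the number of
vertices adjacent to all of `S` is strictly less than `R(k+2−r, ℓ+1)`; equivalently,
`S` is contained in strictly fewer than `R(k+2−r, ℓ+1)` cliques of size `r`. -/
theorem clique_extension_bound {V : Type*} [Fintype V] (G : SimpleGraph V)
    (k l r : ℕ) (hG : G.CliqueFree (k + 1)) (hG' : Gᶜ.CliqueFree (l + 1))
    (hr : 2 ≤ r) (hrk : r ≤ k + 1) :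
    ∀ S : Finset V, G.IsNClique (r - 1) S →
      (Finset.univ.filter (fun v : V => ∀ s ∈ S, G.Adj v s)).card <
        ramseyNumber (k + 2 - r) (l + 1) :=
  clique_extension_bound_general G k l r hG hG'
end

section
/- For every integer r ≥ 5 and ε ∈ (0, 1/2), the function ρ_{r,ε} is twice differentiable on (0,∞), satisfies 0 ≤ ρ_{r,ε}(x) ≤ (r−4)·x/2 for all x ∈ [0,1], and its first and second derivatives satisfy ‖ρ_{r,ε}′‖_∞ ≤ r and ‖ρ_{r,ε}″‖_∞ ≤ 10r. -/
/-!
`ρ` is assembled by two gluings. At `ε` the zero function meets `τ` rescaled so that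
`[ε, 1]` becomes `[0, 1]`; since `τ(0) = τ'(0) = τ''(0) = 0` the seam is `C²`. At `1` the
function is reflected through `x ↦ 1/x`; the derivatives of `f(1/x)` at `1` are `-f'(1)` and
`f''(1) + 2f'(1)`, so `τ'(1) = 0` makes this seam `C²` as well. The bounds come from
`|τ'| ≤ 15/8` and `|τ''| ≤ 6` on `[0, 1]`, the chain-rule factor `1/(1-ε) ≤ 2`, and the
factors `x⁻²`, `x⁻³`, `x⁻⁴ ≤ 1` on the reflected branch.
-/

/-- `τ(x) = 6x⁵ − 15x⁴ + 10x³`. -/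
noncomputable def tauPoly (x : ℝ) : ℝ := 6 * x ^ 5 - 15 * x ^ 4 + 10 * x ^ 3

/-- The branch of `ρ_{r,ε}` on `[0,1]`: `0` on `[0,ε]` and
`(r−4)·τ((x−ε)/(1−ε))/4` on `[ε,1]`. -/
noncomputable def rhoAux (r : ℕ) (ε : ℝ) (y : ℝ) : ℝ :=
  if y ≤ ε then 0 else ((r : ℝ) - 4) * tauPoly ((y - ε) / (1 - ε)) / 4

/-- `ρ_{r,ε}(x)`: equals `rhoAux` for `x ≤ 1` and `ρ_{r,ε}(1/x)` for `x ≥ 1`. -/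
noncomputable def rho (r : ℕ) (ε : ℝ) (x : ℝ) : ℝ :=
  if x ≤ 1 then rhoAux r ε x else rhoAux r ε x⁻¹

open Set Filter

section Gluing

variable {f g f' g' : ℝ → ℝ} {a d : ℝ}

theorem HasDerivAt.ite_le (hf : HasDerivAt f d a) (hg : HasDerivAt g d a) (hfg : f a = g a) :
    HasDerivAt (fun x => if x ≤ a then f x else g x) d a := by
  have hIic : HasDerivWithinAt (fun x => if x ≤ a then f x else g x) d (Iic a) a :=
    hf.hasDerivWithinAt.congr (fun y hy => if_pos hy) (if_pos le_rfl)
  have hIci : HasDerivWithinAt (fun x => if x ≤ a then f x else g x) d (Ici a) a := by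
    refine hg.hasDerivWithinAt.congr (fun y (hy : a ≤ y) => ?_) (by simp [hfg])
    rcases hy.eq_or_lt with rfl | hy
    · simp [hfg]
    · simp [hy.not_ge]
  simpa [Iic_union_Ici] using hIic.union hIci

theorem hasDerivAt_ite_le (hf : ∀ x ≤ a, HasDerivAt f (f' x) x)
    (hg : ∀ x, a ≤ x → HasDerivAt g (g' x) x) (hfg : f a = g a) (hfg' : f' a = g' a) (x : ℝ) :
    HasDerivAt (fun x => if x ≤ a then f x else g x) (if x ≤ a then f' x else g' x) x := by
  rcases lt_trichotomy x a with hx | rfl | hx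
  · rw [if_pos hx.le]
    refine (hf x hx.le).congr_of_eventuallyEq ?_
    filter_upwards [Iio_mem_nhds hx] with y hy using if_pos (le_of_lt hy)
  · rw [if_pos le_rfl]
    exact (hf x le_rfl).ite_le (hfg' ▸ hg x le_rfl) hfg
  · rw [if_neg hx.not_ge]
    refine (hg x hx.le).congr_of_eventuallyEq ?_
    filter_upwards [Ioi_mem_nhds hx] with y hy using if_neg (not_le.mpr hy)

end Gluing

section Inversion

variable {f f' f'' : ℝ → ℝ}

noncomputable def invSymm (f : ℝ → ℝ) (x : ℝ) : ℝ := if x ≤ 1 then f x else f x⁻¹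

noncomputable def invSymmDeriv (f' : ℝ → ℝ) (x : ℝ) : ℝ :=
  if x ≤ 1 then f' x else -f' x⁻¹ / x ^ 2

noncomputable def invSymmDeriv2 (f' f'' : ℝ → ℝ) (x : ℝ) : ℝ :=
  if x ≤ 1 then f'' x else f'' x⁻¹ / x ^ 4 + 2 * f' x⁻¹ / x ^ 3

theorem hasDerivAt_comp_inv {x f'x : ℝ} (hf : HasDerivAt f f'x x⁻¹) (hx : x ≠ 0) :
    HasDerivAt (fun y => f y⁻¹) (-f'x / x ^ 2) x := by
  refine (hf.comp x (hasDerivAt_inv hx)).congr_deriv ?_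
  ring

theorem hasDerivAt_invSymm (hf : ∀ x, HasDerivAt f (f' x) x) (hf'1 : f' 1 = 0) (x : ℝ) :
    HasDerivAt (invSymm f) (invSymmDeriv f' x) x :=
  hasDerivAt_ite_le (fun x _ => hf x)
    (fun x hx => hasDerivAt_comp_inv (hf x⁻¹) (by positivity)) (by simp) (by simp [hf'1]) x

theorem hasDerivAt_invSymmDeriv (hf' : ∀ x, HasDerivAt f' (f'' x) x) (hf'1 : f' 1 = 0)
    (x : ℝ) : HasDerivAt (invSymmDeriv f') (invSymmDeriv2 f' f'' x) x := by
  refine hasDerivAt_ite_le (g' := fun x => f'' x⁻¹ / x ^ 4 + 2 * f' x⁻¹ / x ^ 3)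
    (fun x _ => hf' x) (fun x hx => ?_) (by simp [hf'1]) (by simp [hf'1]) x
  have hx0 : x ≠ 0 := by positivity
  refine (((hasDerivAt_comp_inv (hf' x⁻¹) hx0).neg).div (hasDerivAt_pow 2 x)
    (pow_ne_zero 2 hx0)).congr_deriv ?_
  simp only [Pi.neg_apply]
  field_simp
  ring

variable {M₁ M₂ : ℝ}

theorem abs_invSymmDeriv_le (hf' : ∀ y ≤ 1, |f' y| ≤ M₁) (x : ℝ) :
    |invSymmDeriv f' x| ≤ M₁ := by
  unfold invSymmDeriv
  split_ifs with hx
  · exact hf' x hx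
  · have hx1 : 1 ≤ x := (not_le.mp hx).le
    rw [abs_div, abs_neg, abs_of_nonneg (sq_nonneg x)]
    exact (div_le_self (abs_nonneg _) (one_le_pow₀ hx1)).trans
      (hf' _ (inv_le_one_of_one_le₀ hx1))

theorem abs_invSymmDeriv2_le (hf' : ∀ y ≤ 1, |f' y| ≤ M₁) (hf'' : ∀ y ≤ 1, |f'' y| ≤ M₂)
    (x : ℝ) : |invSymmDeriv2 f' f'' x| ≤ M₂ + 2 * M₁ := by
  have hM₁ : 0 ≤ M₁ := (abs_nonneg _).trans (hf' 0 zero_le_one)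
  unfold invSymmDeriv2
  split_ifs with hx
  · linarith [hf'' x hx]
  · have hx1 : 1 ≤ x := (not_le.mp hx).le
    have hxinv : x⁻¹ ≤ 1 := inv_le_one_of_one_le₀ hx1
    calc |f'' x⁻¹ / x ^ 4 + 2 * f' x⁻¹ / x ^ 3|
        ≤ |f'' x⁻¹| / x ^ 4 + 2 * |f' x⁻¹| / x ^ 3 := by
          refine (abs_add_le _ _).trans_eq ?_
          rw [abs_div, abs_div, abs_mul, abs_two,
            abs_of_nonneg (by positivity : (0 : ℝ) ≤ x ^ 4),
            abs_of_nonneg (by positivity : (0 : ℝ) ≤ x ^ 3)]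
      _ ≤ |f'' x⁻¹| + 2 * |f' x⁻¹| := add_le_add
          (div_le_self (abs_nonneg _) (one_le_pow₀ hx1))
          (div_le_self (by positivity) (one_le_pow₀ hx1))
      _ ≤ M₂ + 2 * M₁ := by linarith [hf'' _ hxinv, hf' _ hxinv]

end Inversion

section StartAt

variable {p p' : ℝ → ℝ} {ε K : ℝ}

noncomputable def startAt (ε K : ℝ) (p : ℝ → ℝ) (y : ℝ) : ℝ :=
  if y ≤ ε then 0 else K * p ((y - ε) / (1 - ε))

theorem hasDerivAt_startAt (hp : ∀ s, HasDerivAt p (p' s) s) (hp0 : p 0 = 0) (hp'0 : p' 0 = 0)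
    (y : ℝ) : HasDerivAt (startAt ε K p) (startAt ε (K / (1 - ε)) p' y) y := by
  have hg (y : ℝ) : HasDerivAt (fun y => K * p ((y - ε) / (1 - ε)))
      (K / (1 - ε) * p' ((y - ε) / (1 - ε))) y :=
    (((hp _).comp y (((hasDerivAt_id y).sub_const ε).div_const (1 - ε))).const_mul K).congr_deriv
      (by simp only [id]; ring)
  exact hasDerivAt_ite_le (fun _ _ => hasDerivAt_const _ _) (fun y _ => hg y)
    (by simp [hp0]) (by simp [hp'0]) y

theorem startAt_one (hp1 : p 1 = 0) : startAt ε K p 1 = 0 := by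
  unfold startAt
  split_ifs with h
  · rfl
  · rw [div_self (sub_ne_zero.mpr (Ne.symm (ne_of_lt (not_le.mp h)))), hp1, mul_zero]

theorem abs_startAt_le {M : ℝ} (hp : ∀ s ∈ Icc (0 : ℝ) 1, |p s| ≤ M) {y : ℝ} (hy : y ≤ 1) :
    |startAt ε K p y| ≤ |K| * M := by
  have hM : 0 ≤ M := (abs_nonneg _).trans (hp 0 (left_mem_Icc.mpr zero_le_one))
  unfold startAt
  split_ifs with h
  · simpa using mul_nonneg (abs_nonneg K) hM
  · have hε1 : 0 < 1 - ε := by linarith [not_le.mp h]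
    rw [abs_mul]
    refine mul_le_mul_of_nonneg_left (hp _ ⟨?_, ?_⟩) (abs_nonneg K)
    · exact div_nonneg (by linarith [not_le.mp h]) hε1.le
    · exact (div_le_one hε1).mpr (by linarith)

theorem startAt_mem_Icc {L : ℝ} (hK : 0 ≤ K) (hε : 0 ≤ ε)
    (hp : ∀ s ∈ Icc (0 : ℝ) 1, p s ∈ Icc 0 (L * s)) {x : ℝ} (hx : x ∈ Icc (0 : ℝ) 1) :
    startAt ε K p x ∈ Icc 0 (K * L * x) := by
  have hL : 0 ≤ L := by
    simpa using nonempty_Icc.mp ⟨_, hp 1 (right_mem_Icc.mpr zero_le_one)⟩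
  unfold startAt
  split_ifs with h
  · exact ⟨le_rfl, by have := hx.1; positivity⟩
  · set t := (x - ε) / (1 - ε)
    have hε1 : 0 < 1 - ε := by linarith [not_le.mp h, hx.2]
    have ht0 : 0 ≤ t := div_nonneg (by linarith [not_le.mp h]) hε1.le
    have htx : t ≤ x := (div_le_iff₀ hε1).mpr (by nlinarith [hx.2])
    obtain ⟨hpt0, hptL⟩ := hp t ⟨ht0, (div_le_one hε1).mpr (by linarith [hx.2])⟩
    refine ⟨mul_nonneg hK hpt0, ?_⟩
    calc K * p t ≤ K * (L * t) := mul_le_mul_of_nonneg_left hptL hK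
      _ ≤ K * L * x := by
        rw [← mul_assoc]; exact mul_le_mul_of_nonneg_left htx (mul_nonneg hK hL)

end StartAt

section Tau

noncomputable def tauPoly' (s : ℝ) : ℝ := 30 * (s * (1 - s)) ^ 2

noncomputable def tauPoly'' (s : ℝ) : ℝ := 60 * (s * (1 - s)) * (1 - 2 * s)

theorem hasDerivAt_tauPoly (s : ℝ) : HasDerivAt tauPoly (tauPoly' s) s := by
  have h := (((hasDerivAt_pow 5 s).const_mul 6).sub ((hasDerivAt_pow 4 s).const_mul 15)).add
    ((hasDerivAt_pow 3 s).const_mul 10)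
  exact h.congr_deriv (by simp only [tauPoly']; push_cast; ring)

theorem hasDerivAt_tauPoly' (s : ℝ) : HasDerivAt tauPoly' (tauPoly'' s) s := by
  have h := ((((hasDerivAt_id s).mul ((hasDerivAt_const s 1).sub (hasDerivAt_id s))).pow
    2).const_mul 30)
  exact h.congr_deriv (by simp only [tauPoly'', id, Pi.mul_apply, Pi.sub_apply]; push_cast; ring)

theorem tauPoly_mem_Icc {s : ℝ} (hs : s ∈ Icc (0 : ℝ) 1) : tauPoly s ∈ Icc 0 (2 * s) := by
  obtain ⟨hs0, hs1⟩ := hs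
  constructor
  · have : tauPoly s = s ^ 3 * (6 * (s - 5 / 4) ^ 2 + 5 / 8) := by unfold tauPoly; ring
    rw [this]; positivity
  · unfold tauPoly
    nlinarith [mul_nonneg hs0 (sub_nonneg.mpr hs1), sq_nonneg (s ^ 2 - s), sq_nonneg (s - 1)]

theorem abs_tauPoly'_le {s : ℝ} (hs : s ∈ Icc (0 : ℝ) 1) : |tauPoly' s| ≤ 15 / 8 := by
  have hu0 : 0 ≤ s * (1 - s) := mul_nonneg hs.1 (sub_nonneg.mpr hs.2)
  have hu : s * (1 - s) ≤ 1 / 4 := by nlinarith [sq_nonneg (2 * s - 1)]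
  rw [tauPoly', abs_of_nonneg (by positivity)]
  nlinarith

theorem abs_tauPoly''_le {s : ℝ} (hs : s ∈ Icc (0 : ℝ) 1) : |tauPoly'' s| ≤ 6 := by
  set u := s * (1 - s)
  have hu0 : 0 ≤ u := mul_nonneg hs.1 (sub_nonneg.mpr hs.2)
  -- `(1 - 2s)² = 1 - 4u`, and `u² (1 - 4u)` is maximal at `u = 1/6`.
  have hsq : tauPoly'' s ^ 2 = 3600 * (u ^ 2 * (1 - 4 * u)) := by
    simp only [tauPoly'', u]; ring
  refine abs_le_of_sq_le_sq ?_ (by norm_num)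
  rw [hsq]
  nlinarith [mul_nonneg hu0 (sq_nonneg (u - 1 / 6)), sq_nonneg (u - 1 / 6)]

end Tau

section Rho

variable {r : ℕ} {ε : ℝ}

theorem rhoAux_eq_startAt (r : ℕ) (ε : ℝ) :
    rhoAux r ε = startAt ε (((r : ℝ) - 4) / 4) tauPoly := by
  ext y
  simp only [rhoAux, startAt, mul_div_right_comm]

noncomputable def rhoAux' (r : ℕ) (ε : ℝ) : ℝ → ℝ :=
  startAt ε (((r : ℝ) - 4) / 4 / (1 - ε)) tauPoly'

noncomputable def rhoAux'' (r : ℕ) (ε : ℝ) : ℝ → ℝ :=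
  startAt ε (((r : ℝ) - 4) / 4 / (1 - ε) / (1 - ε)) tauPoly''

theorem rhoAux'_one (r : ℕ) (ε : ℝ) : rhoAux' r ε 1 = 0 :=
  startAt_one (by simp [tauPoly'])

theorem hasDerivAt_rho (r : ℕ) (ε x : ℝ) :
    HasDerivAt (rho r ε) (invSymmDeriv (rhoAux' r ε) x) x := by
  refine hasDerivAt_invSymm (f := rhoAux r ε) (fun y => ?_) (rhoAux'_one r ε) x
  rw [rhoAux_eq_startAt]
  exact hasDerivAt_startAt hasDerivAt_tauPoly (by simp [tauPoly]) (by simp [tauPoly']) y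

theorem hasDerivAt_rhoAux' (r : ℕ) (ε y : ℝ) : HasDerivAt (rhoAux' r ε) (rhoAux'' r ε y) y :=
  hasDerivAt_startAt hasDerivAt_tauPoly' (by simp [tauPoly']) (by simp [tauPoly'']) y

theorem abs_rhoAux'_le (hr : 4 ≤ r) (hε : ε ≤ 1 / 2) {y : ℝ} (hy : y ≤ 1) :
    |rhoAux' r ε y| ≤ r - 4 := by
  have hr' : (0 : ℝ) ≤ r - 4 := by rw [sub_nonneg]; exact_mod_cast hr
  have hK : |((r : ℝ) - 4) / 4 / (1 - ε)| ≤ (r - 4) / 2 := by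
    rw [abs_of_nonneg (by apply div_nonneg <;> linarith), div_le_iff₀ (by linarith)]
    nlinarith
  calc |rhoAux' r ε y| ≤ |((r : ℝ) - 4) / 4 / (1 - ε)| * (15 / 8) :=
        abs_startAt_le (fun s hs => abs_tauPoly'_le hs) hy
    _ ≤ r - 4 := by nlinarith

theorem abs_rhoAux''_le (hr : 4 ≤ r) (hε : ε ≤ 1 / 2) {y : ℝ} (hy : y ≤ 1) :
    |rhoAux'' r ε y| ≤ 6 * (r - 4) := by
  have hr' : (0 : ℝ) ≤ r - 4 := by rw [sub_nonneg]; exact_mod_cast hr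
  have hK : |((r : ℝ) - 4) / 4 / (1 - ε) / (1 - ε)| ≤ r - 4 := by
    rw [abs_of_nonneg (by apply div_nonneg <;> [apply div_nonneg; skip] <;> linarith),
      div_div, div_div, div_le_iff₀ (by nlinarith)]
    have h : 1 ≤ 4 * ((1 - ε) * (1 - ε)) := by nlinarith
    nlinarith [mul_le_mul_of_nonneg_left h hr']
  calc |rhoAux'' r ε y| ≤ |((r : ℝ) - 4) / 4 / (1 - ε) / (1 - ε)| * 6 :=
        abs_startAt_le (fun s hs => abs_tauPoly''_le hs) hy
    _ ≤ 6 * (r - 4) := by nlinarith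

theorem rho_mem_Icc (hr : 4 ≤ r) (hε : 0 ≤ ε) {x : ℝ} (hx : x ∈ Icc (0 : ℝ) 1) :
    rho r ε x ∈ Icc 0 (((r : ℝ) - 4) * x / 2) := by
  have hr' : (0 : ℝ) ≤ (r - 4) / 4 := by
    apply div_nonneg _ zero_le_four; rw [sub_nonneg]; exact_mod_cast hr
  have h := startAt_mem_Icc hr' hε (fun s hs => tauPoly_mem_Icc hs) hx
  rw [← rhoAux_eq_startAt] at h
  rw [rho, if_pos hx.2]
  convert h using 2
  ring

end Rho

/-- For every integer `r ≥ 5` and `ε ∈ (0, 1/2)`, `ρ_{r,ε}` is twice differentiable on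
`(0,∞)`, satisfies `0 ≤ ρ_{r,ε}(x) ≤ (r−4)x/2` on `[0,1]`, and its first and second
derivatives are bounded by `r` and `10r` respectively. -/
theorem rho_properties (r : ℕ) (hr : 5 ≤ r) (ε : ℝ) (hε : ε ∈ Set.Ioo (0 : ℝ) (1 / 2)) :
    (∀ x ∈ Set.Ioi (0 : ℝ),
        DifferentiableAt ℝ (rho r ε) x ∧ DifferentiableAt ℝ (deriv (rho r ε)) x) ∧
      (∀ x ∈ Set.Icc (0 : ℝ) 1, 0 ≤ rho r ε x ∧ rho r ε x ≤ ((r : ℝ) - 4) * x / 2) ∧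
      (∀ x ∈ Set.Ici (0 : ℝ), |deriv (rho r ε) x| ≤ (r : ℝ)) ∧
      (∀ x ∈ Set.Ici (0 : ℝ), |deriv (deriv (rho r ε)) x| ≤ 10 * (r : ℝ)) := by
  have hr4 : 4 ≤ r := by omega
  have hderiv : deriv (rho r ε) = invSymmDeriv (rhoAux' r ε) :=
    funext fun x => (hasDerivAt_rho r ε x).deriv
  have hderiv2 (x : ℝ) :
      HasDerivAt (deriv (rho r ε)) (invSymmDeriv2 (rhoAux' r ε) (rhoAux'' r ε) x) x :=
    hderiv ▸ hasDerivAt_invSymmDeriv (hasDerivAt_rhoAux' r ε) (rhoAux'_one r ε) x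
  have h1 (y) (hy : y ≤ 1) := abs_rhoAux'_le hr4 hε.2.le hy
  have h2 (y) (hy : y ≤ 1) := abs_rhoAux''_le hr4 hε.2.le hy
  refine ⟨fun x _ => ⟨(hasDerivAt_rho r ε x).differentiableAt, (hderiv2 x).differentiableAt⟩,
    fun x hx => rho_mem_Icc hr4 hε.1.le hx, fun x _ => ?_, fun x _ => ?_⟩
  · rw [hderiv]
    linarith [abs_invSymmDeriv_le h1 x]
  · rw [(hderiv2 x).deriv]
    linarith [abs_invSymmDeriv2_le h1 h2 x]
end
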